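/- arXiv:1501.06513 — 2 statements merged into one kernel-verified Lean document; each statement's English description precedes it below -/
import Mathlib

section
/- O'Neil's product inequality: let (X, μ) be a σ-finite measure space, q ∈ (2,∞) and r = q/(q−2). If g ∈ L^q(X) and h ∈ L^{r,∞}(X), then the pointwise product g·h belongs to the Lorentz space L^{q',q}(X) with ‖g·h‖*_{q',q} ≤ C·‖g‖_q·‖h‖*_{r,∞}, where 1/q + 1/q' = 1. -/
open MeasureTheory Set ENNReal NNReal

/-- The decreasing rearrangement of `g` with respect to `μ`. -/
noncomputable def decRearr {X : Type*} [MeasurableSpace X] (μ : Measure X) (g : X → ℂ)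
    (t : ℝ) : ℝ≥0∞ :=
  sInf {s : ℝ≥0∞ | μ {x | s < (‖g x‖₊ : ℝ≥0∞)} ≤ ENNReal.ofReal t}

/-- The Lorentz quasinorm `‖g‖*_{p,s}`. -/
noncomputable def lorentzNorm {X : Type*} [MeasurableSpace X] (μ : Measure X) (g : X → ℂ)
    (p s : ℝ) : ℝ≥0∞ :=
  (ENNReal.ofReal (s / p) *
      ∫⁻ t in Ioi (0 : ℝ), ENNReal.ofReal (t ^ (s / p - 1)) * decRearr μ g t ^ s) ^ (1 / s)

/-- The weak-`L^r` quasinorm `‖h‖*_{r,∞} = sup_{t>0} t · λ_h(t)^{1/r}`. -/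
noncomputable def weakNorm {X : Type*} [MeasurableSpace X] (μ : Measure X) (h : X → ℂ)
    (r : ℝ) : ℝ≥0∞ :=
  ⨆ t : ℝ, ENNReal.ofReal t * (μ {x | t < ‖h x‖}) ^ (1 / r)

/-!
Split the product at half the level: `(gh)*(t) ≤ g*(t/2) h*(t/2)`. The weak-type bound
`(t/2)^(1/r) h*(t/2) ≤ ‖h‖*_{r,∞}` with `1/r = (q-2)/q` exactly absorbs the weight `t^(q-2)`
of the `L^{q',q}` quasinorm, leaving `2^(q-2) ‖h‖*^q ∫ g*(t/2)^q dt = 2^(q-1) ‖h‖*^q ∫ g*^q`.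
Finally `∫ g*^q ≤ ‖g‖_q^q`, since each level set of `g*` has measure at most that of the
corresponding level set of `g`, and both integrals are computed by the layer cake formula.
-/

lemma ofReal_lt_nnnorm_iff {E : Type*} [SeminormedAddGroup E] {c : ℝ} (hc : 0 ≤ c) (x : E) :
    ENNReal.ofReal c < ‖x‖₊ ↔ c < ‖x‖ := by
  rw [← ofReal_coe_nnreal, ENNReal.ofReal_lt_ofReal_iff_of_nonneg hc, coe_nnnorm]

lemma volume_Ioi_inter_ofReal_lt (c : ℝ≥0∞) :
    volume (Ioi (0 : ℝ) ∩ {s | ENNReal.ofReal s < c}) = c := by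
  rcases eq_top_or_lt_top c with rfl | hc
  · simp [Real.volume_Ioi]
  have : Ioi (0 : ℝ) ∩ {s | ENNReal.ofReal s < c} = Ioo 0 c.toReal := by
    ext s
    simp only [mem_inter_iff, mem_Ioi, mem_ofPred_eq, mem_Ioo, and_congr_right_iff]
    exact fun hs => ENNReal.ofReal_lt_iff_lt_toReal hs.le hc.ne
  rw [this, Real.volume_Ioo, sub_zero, ENNReal.ofReal_toReal hc.ne]

/-- `lintegral_eq_lintegral_meas_lt` for functions that may take the value `∞`. -/
lemma lintegral_eq_lintegral_meas_ofReal_lt {β : Type*} [MeasurableSpace β] (ν : Measure β)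
    [SFinite ν] {F : β → ℝ≥0∞} (hF : Measurable F) :
    ∫⁻ b, F b ∂ν = ∫⁻ s in Ioi (0 : ℝ), ν {b | ENNReal.ofReal s < F b} := by
  have hlevel : MeasurableSet {p : β × ℝ | ENNReal.ofReal p.2 < F p.1} :=
    measurableSet_lt measurable_snd.ennreal_ofReal (hF.comp measurable_fst)
  calc ∫⁻ b, F b ∂ν
      = ∫⁻ b, (∫⁻ s in Ioi (0 : ℝ), {s | ENNReal.ofReal s < F b}.indicator 1 s) ∂ν := by
        refine lintegral_congr fun b => ?_
        rw [lintegral_indicator_one (measurableSet_lt ENNReal.measurable_ofReal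
          measurable_const), Measure.restrict_apply' measurableSet_Ioi, inter_comm,
          volume_Ioi_inter_ofReal_lt]
    _ = ∫⁻ s in Ioi (0 : ℝ), ∫⁻ b, {b | ENNReal.ofReal s < F b}.indicator 1 b ∂ν :=
        lintegral_lintegral_swap
          (f := fun b s => {s | ENNReal.ofReal s < F b}.indicator 1 s)
          (measurable_const.indicator hlevel).aemeasurable
    _ = ∫⁻ s in Ioi (0 : ℝ), ν {b | ENNReal.ofReal s < F b} := by
        refine lintegral_congr fun s => ?_
        rw [lintegral_indicator_one (measurableSet_lt measurable_const hF)]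

lemma setLIntegral_Ioi_comp_div (F : ℝ → ℝ≥0∞) {a : ℝ} (ha : 0 < a) :
    ∫⁻ t in Ioi 0, F (t / a) = ENNReal.ofReal a * ∫⁻ t in Ioi 0, F t := by
  have hindicator :
      (fun s => (Ioi 0).indicator (fun t => F (t / a)) (s * a)) = (Ioi 0).indicator F := by
    ext s
    simp only [indicator, mem_Ioi, mul_pos_iff_of_pos_right ha, mul_div_cancel_right₀ _ ha.ne']
  conv_lhs => rw [← lintegral_indicator measurableSet_Ioi,
    ← Real.smul_map_volume_mul_right ha.ne', lintegral_smul_measure,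
    (measurableEmbedding_mulRight₀ ha.ne').lintegral_map, hindicator, lintegral_indicator measurableSet_Ioi, abs_of_pos ha, smul_eq_mul]

lemma lintegral_le_lintegral_ofReal_of_meas_lt_le {α β : Type*} [MeasurableSpace α]
    [MeasurableSpace β] {ν : Measure β} [SFinite ν] {μ : Measure α} {F : β → ℝ≥0∞}
    (hF : Measurable F) {f : α → ℝ} (hf₀ : 0 ≤ f) (hf : AEMeasurable f μ)
    (h : ∀ s > 0, ν {b | ENNReal.ofReal s < F b} ≤ μ {a | s < f a}) :
    ∫⁻ b, F b ∂ν ≤ ∫⁻ a, ENNReal.ofReal (f a) ∂μ := by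
  rw [lintegral_eq_lintegral_meas_ofReal_lt ν hF,
    lintegral_eq_lintegral_meas_lt μ (ae_of_all _ hf₀) hf]
  exact setLIntegral_mono' measurableSet_Ioi h

section Rearrangement

variable {X : Type*} [MeasurableSpace X] (μ : Measure X)

lemma decRearr_le_of_meas_lt_le {g : X → ℂ} {t : ℝ} {s : ℝ≥0∞}
    (h : μ {x | s < ‖g x‖₊} ≤ ENNReal.ofReal t) : decRearr μ g t ≤ s :=
  sInf_le h

lemma ofReal_lt_meas_of_lt_decRearr {g : X → ℂ} {t : ℝ} {s : ℝ≥0∞} (h : s < decRearr μ g t) :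
    ENNReal.ofReal t < μ {x | s < ‖g x‖₊} :=
  not_le.mp fun hs => (decRearr_le_of_meas_lt_le μ hs).not_gt h

lemma decRearr_antitone (g : X → ℂ) : Antitone (decRearr μ g) := fun _ _ hab =>
  sInf_le_sInf fun _ hs => hs.trans (ENNReal.ofReal_le_ofReal hab)

/-- The infimum defining `decRearr` is attained: the distribution function is right continuous. -/
lemma meas_decRearr_lt_le (g : X → ℂ) (t : ℝ) :
    μ {x | decRearr μ g t < ‖g x‖₊} ≤ ENNReal.ofReal t := by
  set a := decRearr μ g t
  rcases eq_top_or_lt_top a with ha | ha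
  · simp [ha]
  obtain ⟨u, hu_anti, hu_mem, hu_lim⟩ := exists_seq_strictAnti_tendsto' ha
  have hunion : {x | a < (‖g x‖₊ : ℝ≥0∞)} = ⋃ n, {x | u n < ‖g x‖₊} := by
    ext x
    simp only [mem_ofPred_eq, mem_iUnion]
    refine ⟨fun hx => (hu_lim.eventually (gt_mem_nhds hx)).exists, ?_⟩
    rintro ⟨n, hn⟩
    exact (hu_mem n).1.trans hn
  have hmono : Monotone fun n => {x | u n < (‖g x‖₊ : ℝ≥0∞)} := fun m n hmn x hx =>
    (hu_anti.antitone hmn).trans_lt hx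
  rw [hunion, hmono.measure_iUnion]
  refine iSup_le fun n => ?_
  obtain ⟨s, hs, hsu⟩ := sInf_lt_iff.mp (hu_mem n).1
  exact (measure_mono fun x hx => hsu.trans hx).trans hs

lemma decRearr_mul_le (g h : X → ℂ) {t₁ t₂ : ℝ} (ht₁ : 0 ≤ t₁) (ht₂ : 0 ≤ t₂) :
    decRearr μ (g * h) (t₁ + t₂) ≤ decRearr μ g t₁ * decRearr μ h t₂ := by
  apply decRearr_le_of_meas_lt_le
  have hsub : {x | decRearr μ g t₁ * decRearr μ h t₂ < ‖(g * h) x‖₊} ⊆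
      {x | decRearr μ g t₁ < ‖g x‖₊} ∪ {x | decRearr μ h t₂ < ‖h x‖₊} := by
    intro x hx
    by_contra hc
    simp only [mem_union, mem_ofPred_eq, not_or, not_lt] at hc
    simp only [mem_ofPred_eq, Pi.mul_apply, nnnorm_mul, ENNReal.coe_mul] at hx
    exact hx.not_ge (mul_le_mul' hc.1 hc.2)
  calc _ ≤ _ := measure_mono hsub
    _ ≤ _ := measure_union_le _ _
    _ ≤ ENNReal.ofReal t₁ + ENNReal.ofReal t₂ :=
        add_le_add (meas_decRearr_lt_le μ g t₁) (meas_decRearr_lt_le μ h t₂)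
    _ = ENNReal.ofReal (t₁ + t₂) := (ENNReal.ofReal_add ht₁ ht₂).symm

lemma rpow_mul_decRearr_le_weakNorm (h : X → ℂ) {r : ℝ} (hr : 0 < r) {u : ℝ} (hu : 0 < u) :
    ENNReal.ofReal u ^ (1 / r) * decRearr μ h u ≤ weakNorm μ h r := by
  have hu₀ : ENNReal.ofReal u ^ (1 / r) ≠ 0 := by positivity
  have hu_top : ENNReal.ofReal u ^ (1 / r) ≠ ∞ := by finiteness
  rw [mul_comm, ← ENNReal.le_div_iff_mul_le (Or.inl hu₀) (Or.inl hu_top)]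
  refine le_of_forall_lt_imp_le_of_dense fun s hs => ?_
  rw [ENNReal.le_div_iff_mul_le (Or.inl hu₀) (Or.inl hu_top), mul_comm]
  have hs_top : s ≠ ∞ := ne_top_of_lt hs
  have hlevel : {x | s < (‖h x‖₊ : ℝ≥0∞)} = {x | s.toReal < ‖h x‖} := by
    ext x
    rw [mem_ofPred_eq, mem_ofPred_eq, ← ofReal_lt_nnnorm_iff ENNReal.toReal_nonneg,
      ENNReal.ofReal_toReal hs_top]
  calc ENNReal.ofReal u ^ (1 / r) * s ≤ μ {x | s < ‖h x‖₊} ^ (1 / r) * s := by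
        gcongr
        exact (ofReal_lt_meas_of_lt_decRearr μ hs).le
    _ = ENNReal.ofReal s.toReal * μ {x | s.toReal < ‖h x‖} ^ (1 / r) := by
        rw [ENNReal.ofReal_toReal hs_top, hlevel, mul_comm]
    _ ≤ weakNorm μ h r :=
        le_iSup (fun t : ℝ => ENNReal.ofReal t * μ {x | t < ‖h x‖} ^ (1 / r)) s.toReal

lemma restrict_Ioi_meas_lt_decRearr_le (g : X → ℂ) (s : ℝ≥0∞) :
    volume.restrict (Ioi 0) {t : ℝ | s < decRearr μ g t} ≤ μ {x | s < ‖g x‖₊} := by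
  rw [Measure.restrict_apply' measurableSet_Ioi]
  set L := μ {x | s < (‖g x‖₊ : ℝ≥0∞)}
  rcases eq_top_or_lt_top L with hL | hL
  · simp [hL]
  have hsub : {t : ℝ | s < decRearr μ g t} ∩ Ioi 0 ⊆ Ioo 0 L.toReal := by
    rintro t ⟨hst, ht⟩
    refine ⟨ht, not_le.mp fun hLt => hst.not_ge (decRearr_le_of_meas_lt_le μ ?_)⟩
    exact (ENNReal.ofReal_toReal hL.ne).symm.le.trans (ENNReal.ofReal_le_ofReal hLt)
  calc _ ≤ volume (Ioo 0 L.toReal) := measure_mono hsub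
    _ = L := by rw [Real.volume_Ioo, sub_zero, ENNReal.ofReal_toReal hL.ne]

lemma lintegral_decRearr_rpow_le {g : X → ℂ} (hg : AEMeasurable g μ) {p : ℝ} (hp : 0 < p) :
    ∫⁻ t in Ioi 0, decRearr μ g t ^ p ≤ ∫⁻ x, ‖g x‖ₑ ^ p ∂μ := by
  have hnorm : ∀ x, ‖g x‖ₑ ^ p = ENNReal.ofReal (‖g x‖ ^ p) := fun x => by
    rw [← ENNReal.ofReal_rpow_of_nonneg (norm_nonneg _) hp.le, ofReal_norm]
  simp_rw [hnorm]
  refine lintegral_le_lintegral_ofReal_of_meas_lt_le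
    ((decRearr_antitone μ g).measurable.pow_const p) (fun x => by positivity)
    (hg.norm.pow_const p) fun s hs => ?_
  set σ := s ^ p⁻¹
  have hσ : 0 ≤ σ := by positivity
  have hs_eq : s = σ ^ p := (Real.rpow_inv_rpow hs.le hp.ne').symm
  have hleft : {t | ENNReal.ofReal s < decRearr μ g t ^ p} =
      {t | ENNReal.ofReal σ < decRearr μ g t} := by
    ext t
    rw [mem_ofPred_eq, mem_ofPred_eq, hs_eq, ← ENNReal.ofReal_rpow_of_nonneg hσ hp.le,
      ENNReal.rpow_lt_rpow_iff hp]
  have hright : {x | s < ‖g x‖ ^ p} = {x | ENNReal.ofReal σ < ‖g x‖₊} := by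
    ext x
    rw [mem_ofPred_eq, mem_ofPred_eq, hs_eq, Real.rpow_lt_rpow_iff hσ (norm_nonneg _) hp,
      ofReal_lt_nnnorm_iff hσ]
  rw [hleft, hright]
  exact restrict_Ioi_meas_lt_decRearr_le μ g _

lemma ofReal_rpow_mul_decRearr_mul_le (g h : X → ℂ) {q : ℝ} (hq : 2 < q) {t : ℝ}
    (ht : 0 < t) :
    ENNReal.ofReal (t ^ (q - 2)) * decRearr μ (g * h) t ^ q ≤
      ENNReal.ofReal (2 ^ (q - 2)) * weakNorm μ h (q / (q - 2)) ^ q *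
        decRearr μ g (t / 2) ^ q := by
  have hq₀ : 0 < q := by linarith
  have ht₂ : 0 < t / 2 := by positivity
  have hsplit : decRearr μ (g * h) t ≤ decRearr μ g (t / 2) * decRearr μ h (t / 2) := by
    simpa only [add_halves] using decRearr_mul_le μ g h ht₂.le ht₂.le
  have hweak := rpow_mul_decRearr_le_weakNorm μ h (r := q / (q - 2)) (by bound) ht₂
  have hpow : ENNReal.ofReal (t ^ (q - 2)) =
      ENNReal.ofReal (2 ^ (q - 2)) * (ENNReal.ofReal (t / 2) ^ (1 / (q / (q - 2)))) ^ q := by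
    rw [← ENNReal.rpow_mul, show 1 / (q / (q - 2)) * q = q - 2 by field_simp,
      ENNReal.ofReal_rpow_of_pos ht₂, ← ENNReal.ofReal_mul (by positivity),
      ← Real.mul_rpow (by norm_num) ht₂.le, mul_div_cancel₀ _ two_ne_zero]
  calc ENNReal.ofReal (t ^ (q - 2)) * decRearr μ (g * h) t ^ q
      ≤ ENNReal.ofReal (t ^ (q - 2)) * (decRearr μ g (t / 2) * decRearr μ h (t / 2)) ^ q := by
        gcongr
    _ = ENNReal.ofReal (2 ^ (q - 2)) *
          (ENNReal.ofReal (t / 2) ^ (1 / (q / (q - 2))) * decRearr μ h (t / 2)) ^ q *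
            decRearr μ g (t / 2) ^ q := by
        rw [hpow, ENNReal.mul_rpow_of_nonneg _ _ hq₀.le, ENNReal.mul_rpow_of_nonneg _ _ hq₀.le]
        ring
    _ ≤ _ := by gcongr

lemma lintegral_rpow_decRearr_mul_le {g : X → ℂ} (hg : AEMeasurable g μ) (h : X → ℂ) {q : ℝ}
    (hq : 2 < q) :
    ∫⁻ t in Ioi 0, ENNReal.ofReal (t ^ (q - 2)) * decRearr μ (g * h) t ^ q ≤
      ENNReal.ofReal (2 ^ (q - 1)) * weakNorm μ h (q / (q - 2)) ^ q * ∫⁻ x, ‖g x‖ₑ ^ q ∂μ := by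
  have hG : Measurable fun t => decRearr μ g (t / 2) ^ q :=
    ((decRearr_antitone μ g).measurable.comp (measurable_id.div_const 2)).pow_const q
  calc _ ≤ ∫⁻ t in Ioi 0, ENNReal.ofReal (2 ^ (q - 2)) * weakNorm μ h (q / (q - 2)) ^ q *
          decRearr μ g (t / 2) ^ q :=
        setLIntegral_mono' measurableSet_Ioi fun t ht =>
          ofReal_rpow_mul_decRearr_mul_le μ g h hq ht
    _ = ENNReal.ofReal (2 ^ (q - 2)) * weakNorm μ h (q / (q - 2)) ^ q *
          (ENNReal.ofReal 2 * ∫⁻ t in Ioi 0, decRearr μ g t ^ q) := by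
        rw [lintegral_const_mul _ hG, setLIntegral_Ioi_comp_div (fun t => decRearr μ g t ^ q)
          two_pos]
    _ ≤ ENNReal.ofReal (2 ^ (q - 2)) * weakNorm μ h (q / (q - 2)) ^ q *
          (ENNReal.ofReal 2 * ∫⁻ x, ‖g x‖ₑ ^ q ∂μ) := by
        gcongr
        exact lintegral_decRearr_rpow_le μ hg (by linarith)
    _ = _ := by
        rw [show q - 1 = q - 2 + 1 by ring, Real.rpow_add_one two_ne_zero,
          ENNReal.ofReal_mul (by positivity)]
        ring

lemma lorentzNorm_mul_le {g : X → ℂ} (hg : AEMeasurable g μ) (h : X → ℂ) {q : ℝ} (hq : 2 < q) :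
    lorentzNorm μ (g * h) (q / (q - 1)) q ≤
      ENNReal.ofReal (((q - 1) * 2 ^ (q - 1)) ^ (1 / q)) * eLpNorm g (ENNReal.ofReal q) μ *
        weakNorm μ h (q / (q - 2)) := by
  have hq₀ : 0 < q := by linarith
  have hexp : q / (q / (q - 1)) = q - 1 := by
    rw [div_div_eq_mul_div, mul_div_cancel_left₀ _ hq₀.ne']
  have hLq : ∫⁻ x, ‖g x‖ₑ ^ q ∂μ = eLpNorm g (ENNReal.ofReal q) μ ^ q := by
    rw [lintegral_rpow_enorm_eq_rpow_eLpNorm' hq₀, eLpNorm_eq_eLpNorm' (by simpa using hq₀)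
      ENNReal.ofReal_ne_top, ENNReal.toReal_ofReal hq₀.le]
  rw [lorentzNorm, hexp, show q - 1 - 1 = q - 2 by ring]
  calc _ ≤ (ENNReal.ofReal (q - 1) * (ENNReal.ofReal (2 ^ (q - 1)) *
        weakNorm μ h (q / (q - 2)) ^ q * eLpNorm g (ENNReal.ofReal q) μ ^ q)) ^ (1 / q) := by
        rw [← hLq]
        gcongr
        exact lintegral_rpow_decRearr_mul_le μ hg h hq
    _ = _ := by
        have hC : ENNReal.ofReal (((q - 1) * 2 ^ (q - 1)) ^ (1 / q)) =
            (ENNReal.ofReal (q - 1) * ENNReal.ofReal (2 ^ (q - 1))) ^ (1 / q) := by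
          rw [← ENNReal.ofReal_mul (by linarith), ENNReal.ofReal_rpow_of_nonneg
            (mul_nonneg (by linarith) (by positivity)) (by positivity)]
        have hroot : ∀ a b w e : ℝ≥0∞, (a * (b * w ^ q * e ^ q)) ^ (1 / q) =
            (a * b) ^ (1 / q) * e * w := fun a b w e => by
          rw [show a * (b * w ^ q * e ^ q) = a * b * (e * w) ^ q by
              rw [ENNReal.mul_rpow_of_nonneg _ _ hq₀.le]; ring,
            ENNReal.mul_rpow_of_nonneg _ _ (by positivity), one_div,
            ENNReal.rpow_rpow_inv hq₀.ne', mul_assoc]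
        rw [hC, hroot]

end Rearrangement

theorem stmt8_general {X : Type*} [MeasurableSpace X] (μ : Measure X)
    (q : ℝ) (hq : 2 < q) :
    ∃ C : ℝ≥0, 0 < C ∧ ∀ g h : X → ℂ,
      MemLp g (ENNReal.ofReal q) μ → weakNorm μ h (q / (q - 2)) < ∞ →
        lorentzNorm μ (g * h) (q / (q - 1)) q < ∞ ∧
        lorentzNorm μ (g * h) (q / (q - 1)) q
          ≤ C * eLpNorm g (ENNReal.ofReal q) μ * weakNorm μ h (q / (q - 2)) := by
  have hq₁ : 0 < q - 1 := by linarith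
  refine ⟨(((q - 1) * 2 ^ (q - 1)) ^ (1 / q)).toNNReal, by positivity, fun g h hg hh => ?_⟩
  have hbound := lorentzNorm_mul_le μ hg.aestronglyMeasurable.aemeasurable h hq
  exact ⟨hbound.trans_lt (by finiteness), hbound⟩

/-- O'Neil's product inequality: for `q ∈ (2,∞)`, `r = q/(q-2)`, `g ∈ L^q` and
`h ∈ L^{r,∞}`, the product `g·h` lies in `L^{q',q}` with
`‖gh‖*_{q',q} ≤ C ‖g‖_q ‖h‖*_{r,∞}`, where `1/q + 1/q' = 1`. -/
theorem stmt8 {X : Type*} [MeasurableSpace X] (μ : Measure X) [SigmaFinite μ]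
    (q : ℝ) (hq : 2 < q) :
    ∃ C : ℝ≥0, 0 < C ∧ ∀ g h : X → ℂ,
      MemLp g (ENNReal.ofReal q) μ → weakNorm μ h (q / (q - 2)) < ∞ →
        lorentzNorm μ (g * h) (q / (q - 1)) q < ∞ ∧
        lorentzNorm μ (g * h) (q / (q - 1)) q
          ≤ C * eLpNorm g (ENNReal.ofReal q) μ * weakNorm μ h (q / (q - 2)) :=
  stmt8_general μ q hq
end

section
/- Let μ be a measure on X, p > 2, and ψ : X → (0,∞) measurable with μ({ψ ≤ t}) ≤ C t for all t > 0. If f : X → ℂ is measurable with ∫_X |f|^p ψ^{p−2} dμ < ∞, then f belongs to the Lorentz space L^{p',p}(X, μ) (where 1/p + 1/p' = 1) and ‖f‖*_{p',p} ≤ C_p (∫_X |f|^p ψ^{p−2} dμ)^{1/p}. -/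
open MeasureTheory Set ENNReal NNReal

/-! Write `f = g * h` with `g = f ψ^(1 - 2/p)` and `h = ψ^(2/p - 1)`, so that
`∫ |g|^p = ∫ |f|^p ψ^(p-2)`. The Young condition is a weak-type bound on `h`:
`h*(t/2) ≤ (t / 2C)^(2/p - 1)`. Together with `f*(t) ≤ g*(t/2) h*(t/2)` this gives
`t^(p-2) f*(t)^p ≤ (2C)^(p-2) g*(t/2)^p`, and `∫ g*(t/2)^p dt ≤ 2 ∫ |g|^p` because `g*` and `|g|`
have comparable distribution functions. -/

lemma lintegral_min_natCast_eq_lintegral_meas_lt {α : Type*} [MeasurableSpace α]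
    (ν : Measure α) {F : α → ℝ≥0∞} (hF : Measurable F) (n : ℕ) :
    ∫⁻ a, min (F a) n ∂ν = ∫⁻ t in Ioi 0, ν {a | ENNReal.ofReal t < min (F a) n} := by
  have hfin : ∀ a, min (F a) n ≠ ∞ := fun a =>
    ((min_le_right _ _).trans_lt (natCast_lt_top n)).ne
  calc ∫⁻ a, min (F a) n ∂ν = ∫⁻ a, ENNReal.ofReal (min (F a) n).toReal ∂ν := by
        simp only [ofReal_toReal (hfin _)]
    _ = ∫⁻ t in Ioi 0, ν {a | t < (min (F a) n).toReal} :=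
        lintegral_eq_lintegral_meas_lt ν (.of_forall fun _ => toReal_nonneg)
          (hF.min measurable_const).ennreal_toReal.aemeasurable
    _ = ∫⁻ t in Ioi 0, ν {a | ENNReal.ofReal t < min (F a) n} := by
        refine setLIntegral_congr_fun measurableSet_Ioi fun t ht => ?_
        simp only [ofReal_lt_iff_lt_toReal ht.le (hfin _)]

theorem lintegral_le_lintegral_of_meas_lt_le {α β : Type*} [MeasurableSpace α]
    [MeasurableSpace β] {ν : Measure α} {ρ : Measure β} {F : α → ℝ≥0∞} {G : β → ℝ≥0∞}
    (hF : Measurable F) (hG : Measurable G) (h : ∀ s, ν {a | s < F a} ≤ ρ {b | s < G b}) :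
    ∫⁻ a, F a ∂ν ≤ ∫⁻ b, G b ∂ρ := by
  have hsup : ∀ x : ℝ≥0∞, ⨆ n : ℕ, min x n = x := fun x => by
    rw [← inf_iSup_eq, iSup_natCast, inf_top_eq]
  have htrunc : ∀ (n : ℕ) s, ν {a | s < min (F a) n} ≤ ρ {b | s < min (G b) n} := by
    intro n s
    by_cases hs : s < n <;> simp [hs, h]
  -- Truncation at `n` makes both functions real-valued; for those the layer-cake formula
  -- `lintegral_eq_lintegral_meas_lt` holds for arbitrary, not necessarily σ-finite, measures.
  rw [← lintegral_congr fun a => hsup (F a), lintegral_iSup (fun n => hF.min measurable_const)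
    (fun m n hmn a => min_le_min_left _ (Nat.cast_le.2 hmn))]
  refine iSup_le fun n => ?_
  calc ∫⁻ a, min (F a) n ∂ν
      = ∫⁻ t in Ioi 0, ν {a | ENNReal.ofReal t < min (F a) n} :=
        lintegral_min_natCast_eq_lintegral_meas_lt ν hF n
    _ ≤ ∫⁻ t in Ioi 0, ρ {b | ENNReal.ofReal t < min (G b) n} :=
        lintegral_mono fun t => htrunc n _
    _ = ∫⁻ b, min (G b) n ∂ρ := (lintegral_min_natCast_eq_lintegral_meas_lt ρ hG n).symm
    _ ≤ ∫⁻ b, G b ∂ρ := lintegral_mono fun b => min_le_left _ _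

namespace decRearr

variable {X : Type*} [MeasurableSpace X] {μ : Measure X}

theorem le_of_meas_lt_le {g : X → ℂ} {t : ℝ} {s : ℝ≥0∞}
    (h : μ {x | s < (‖g x‖₊ : ℝ≥0∞)} ≤ ENNReal.ofReal t) : decRearr μ g t ≤ s :=
  sInf_le h

theorem antitone (g : X → ℂ) : Antitone (decRearr μ g) :=
  fun _ _ h => sInf_le_sInf fun _ hs => hs.trans (ofReal_le_ofReal h)

theorem meas_lt_le (g : X → ℂ) (t : ℝ) :
    μ {x | decRearr μ g t < (‖g x‖₊ : ℝ≥0∞)} ≤ ENNReal.ofReal t := by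
  set S := {s : ℝ≥0∞ | μ {x | s < (‖g x‖₊ : ℝ≥0∞)} ≤ ENNReal.ofReal t}
  obtain ⟨u, hu_anti, hu_lim, hu_mem⟩ :=
    exists_seq_tendsto_sInf (⟨⊤, by simp [S]⟩ : S.Nonempty) (OrderBot.bddBelow S)
  have hunion : {x | decRearr μ g t < (‖g x‖₊ : ℝ≥0∞)} = ⋃ n, {x | u n < (‖g x‖₊ : ℝ≥0∞)} := by
    ext x
    simp only [mem_ofPred_eq, mem_iUnion]
    exact ⟨fun hx => (hu_lim.eventually_lt_const hx).exists,
      fun ⟨n, hn⟩ => (sInf_le (hu_mem n)).trans_lt hn⟩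
  have hmono : Monotone fun n => {x | u n < (‖g x‖₊ : ℝ≥0∞)} :=
    fun m n hmn x hx => (hu_anti hmn).trans_lt hx
  rw [hunion, hmono.measure_iUnion]
  exact iSup_le hu_mem

theorem add_le_mul {f g h : X → ℂ}
    (hfgh : ∀ x, (‖f x‖₊ : ℝ≥0∞) ≤ ‖g x‖₊ * ‖h x‖₊) {t₁ t₂ : ℝ} (ht₁ : 0 ≤ t₁) (ht₂ : 0 ≤ t₂) :
    decRearr μ f (t₁ + t₂) ≤ decRearr μ g t₁ * decRearr μ h t₂ := by
  refine le_of_meas_lt_le ?_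
  have hsub : {x | decRearr μ g t₁ * decRearr μ h t₂ < (‖f x‖₊ : ℝ≥0∞)}
      ⊆ {x | decRearr μ g t₁ < (‖g x‖₊ : ℝ≥0∞)} ∪ {x | decRearr μ h t₂ < (‖h x‖₊ : ℝ≥0∞)} := by
    intro x hx
    by_contra hc
    simp only [mem_union, mem_ofPred_eq, not_or, not_lt] at hc
    exact (hfgh x).trans (mul_le_mul' hc.1 hc.2) |>.not_gt hx
  calc μ {x | decRearr μ g t₁ * decRearr μ h t₂ < (‖f x‖₊ : ℝ≥0∞)}
      ≤ μ {x | decRearr μ g t₁ < (‖g x‖₊ : ℝ≥0∞)} + μ {x | decRearr μ h t₂ < (‖h x‖₊ : ℝ≥0∞)} :=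
        (measure_mono hsub).trans (measure_union_le _ _)
    _ ≤ ENNReal.ofReal t₁ + ENNReal.ofReal t₂ := add_le_add (meas_lt_le g t₁) (meas_lt_le h t₂)
    _ = ENNReal.ofReal (t₁ + t₂) := (ofReal_add ht₁ ht₂).symm

theorem volume_lt_comp_div_le (g : X → ℂ) {c : ℝ} (hc : 0 < c) (s : ℝ≥0∞) :
    volume ({t : ℝ | s < decRearr μ g (t / c)} ∩ Ioi 0)
      ≤ ENNReal.ofReal c * μ {x | s < (‖g x‖₊ : ℝ≥0∞)} := by
  set M := μ {x | s < (‖g x‖₊ : ℝ≥0∞)}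
  rcases eq_or_ne M ⊤ with hM | hM
  · simp [hM, mul_top, (ofReal_pos.2 hc).ne']
  have hsub : {t : ℝ | s < decRearr μ g (t / c)} ∩ Ioi 0 ⊆ Ioo 0 (c * M.toReal) := by
    rintro t ⟨hst, ht⟩
    have hlt : ENNReal.ofReal (t / c) < M := not_le.1 fun hle => (le_of_meas_lt_le hle).not_gt hst
    rw [ofReal_lt_iff_lt_toReal (div_nonneg ht.le hc.le) hM, div_lt_iff₀ hc] at hlt
    exact ⟨ht, by linarith⟩
  calc volume ({t : ℝ | s < decRearr μ g (t / c)} ∩ Ioi 0)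
      ≤ volume (Ioo 0 (c * M.toReal)) := measure_mono hsub
    _ = ENNReal.ofReal c * M := by
        rw [Real.volume_Ioo, sub_zero, ofReal_mul hc.le, ofReal_toReal hM]

theorem lintegral_comp_div_rpow_le {g : X → ℂ} (hg : Measurable g) {c p : ℝ} (hc : 0 < c)
    (hp : 0 < p) :
    ∫⁻ t in Ioi 0, decRearr μ g (t / c) ^ p
      ≤ ENNReal.ofReal c * ∫⁻ x, (‖g x‖₊ : ℝ≥0∞) ^ p ∂μ := by
  rw [← smul_eq_mul, ← lintegral_smul_measure]
  have hanti : Antitone fun t => decRearr μ g (t / c) :=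
    (antitone g).comp_monotone fun _ _ h => div_le_div_of_nonneg_right h hc.le
  refine lintegral_le_lintegral_of_meas_lt_le (hanti.measurable.pow_const p) (by fun_prop)
    fun s => ?_
  simp only [← ENNReal.rpow_inv_lt_iff hp]
  rw [Measure.restrict_apply' measurableSet_Ioi]
  exact volume_lt_comp_div_le g hc _

end decRearr

theorem lorentzNorm_conj_exponent_eq {X : Type*} [MeasurableSpace X] (μ : Measure X)
    (f : X → ℂ) {p : ℝ} (hp : 1 < p) :
    lorentzNorm μ f (p / (p - 1)) p
      = (ENNReal.ofReal (p - 1)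
          * ∫⁻ t in Ioi 0, ENNReal.ofReal (t ^ (p - 2)) * decRearr μ f t ^ p) ^ (1 / p) := by
  have hexp : p / (p / (p - 1)) = p - 1 := by
    field_simp [(sub_pos.2 hp).ne']
  rw [lorentzNorm, hexp, show p - 1 - 1 = p - 2 by ring]

section Young

variable {X : Type*} [MeasurableSpace X] {μ : Measure X} {ψ : X → ℝ} {C p : ℝ}

theorem decRearr_rpow_neg_le (hψ : ∀ x, 0 < ψ x) {a τ t : ℝ} (ha : 0 < a) (hτ : 0 < τ)
    (hμ : μ {x | ψ x ≤ τ} ≤ ENNReal.ofReal t) :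
    decRearr μ (fun x => ((ψ x ^ (-a) : ℝ) : ℂ)) t ≤ ENNReal.ofReal (τ ^ (-a)) := by
  refine decRearr.le_of_meas_lt_le (le_trans (measure_mono fun x hx => ?_) hμ)
  simp only [mem_ofPred_eq, Complex.nnnorm_real, ← enorm_eq_nnnorm,
    Real.enorm_eq_ofReal (Real.rpow_nonneg (hψ x).le _),
    ofReal_lt_ofReal_iff_of_nonneg (Real.rpow_nonneg hτ.le _)] at hx
  exact ((Real.rpow_lt_rpow_iff_of_neg hτ (hψ x) (neg_neg_of_pos ha)).1 hx).le

theorem weighted_decRearr_rpow_le_of_young (hψ : ∀ x, 0 < ψ x) (hC : 0 < C)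
    (hYoung : ∀ t : ℝ, 0 < t → μ {x | ψ x ≤ t} ≤ ENNReal.ofReal (C * t)) (hp : 2 < p)
    (f : X → ℂ) {t : ℝ} (ht : 0 < t) :
    ENNReal.ofReal (t ^ (p - 2)) * decRearr μ f t ^ p
      ≤ ENNReal.ofReal ((2 * C) ^ (p - 2))
        * decRearr μ (fun x => f x * ((ψ x ^ ((p - 2) / p) : ℝ) : ℂ)) (t / 2) ^ p := by
  set a := (p - 2) / p
  have hp0 : 0 < p := by linarith
  have ha : 0 < a := div_pos (by linarith) hp0
  have hτ : 0 < t / (2 * C) := by positivity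
  have hsplit : ∀ x,
      (‖f x‖₊ : ℝ≥0∞) ≤ ‖f x * ((ψ x ^ a : ℝ) : ℂ)‖₊ * ‖((ψ x ^ (-a) : ℝ) : ℂ)‖₊ := by
    intro x
    rw [← ENNReal.coe_mul, ← nnnorm_mul, mul_assoc, ← Complex.ofReal_mul,
      ← Real.rpow_add (hψ x), add_neg_cancel, Real.rpow_zero, Complex.ofReal_one, mul_one]
  have hweak := decRearr_rpow_neg_le (μ := μ) (t := t / 2) hψ ha hτ
    ((hYoung _ hτ).trans_eq (by congr 1; field_simp))
  have hfactor : decRearr μ f t ≤ decRearr μ (fun x => f x * ((ψ x ^ a : ℝ) : ℂ)) (t / 2)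
      * ENNReal.ofReal ((t / (2 * C)) ^ (-a)) :=
    calc decRearr μ f t = decRearr μ f (t / 2 + t / 2) := by rw [add_halves]
      _ ≤ _ := decRearr.add_le_mul hsplit (half_pos ht).le (half_pos ht).le
      _ ≤ _ := by gcongr
  have hexp : t ^ (p - 2) * ((t / (2 * C)) ^ (-a)) ^ p = (2 * C) ^ (p - 2) := by
    rw [← Real.rpow_mul hτ.le, neg_mul, div_mul_cancel₀ _ hp0.ne', Real.rpow_neg hτ.le,
      Real.div_rpow ht.le (by positivity)]
    have : t ^ (p - 2) ≠ 0 := (Real.rpow_pos_of_pos ht _).ne'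
    field_simp
  calc ENNReal.ofReal (t ^ (p - 2)) * decRearr μ f t ^ p
      ≤ ENNReal.ofReal (t ^ (p - 2))
          * (decRearr μ (fun x => f x * ((ψ x ^ a : ℝ) : ℂ)) (t / 2)
            * ENNReal.ofReal ((t / (2 * C)) ^ (-a))) ^ p := by gcongr
    _ = ENNReal.ofReal ((2 * C) ^ (p - 2))
          * decRearr μ (fun x => f x * ((ψ x ^ a : ℝ) : ℂ)) (t / 2) ^ p := by
        rw [ENNReal.mul_rpow_of_nonneg _ _ hp0.le,
          ofReal_rpow_of_nonneg (Real.rpow_nonneg hτ.le _) hp0.le, ← hexp,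
          ofReal_mul (Real.rpow_nonneg ht.le _)]
        ring

theorem lintegral_weighted_decRearr_le_of_young (hψm : Measurable ψ) (hψ : ∀ x, 0 < ψ x)
    (hC : 0 < C) (hYoung : ∀ t : ℝ, 0 < t → μ {x | ψ x ≤ t} ≤ ENNReal.ofReal (C * t))
    (hp : 2 < p) {f : X → ℂ} (hf : Measurable f) :
    ∫⁻ t in Ioi 0, ENNReal.ofReal (t ^ (p - 2)) * decRearr μ f t ^ p
      ≤ ENNReal.ofReal ((2 * C) ^ (p - 2))
        * (2 * ∫⁻ x, (‖f x‖₊ : ℝ≥0∞) ^ p * ENNReal.ofReal (ψ x ^ (p - 2)) ∂μ) := by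
  have hp0 : 0 < p := by linarith
  set g : X → ℂ := fun x => f x * ((ψ x ^ ((p - 2) / p) : ℝ) : ℂ)
  have hg : Measurable g := by fun_prop
  have hg_rpow : ∀ x, (‖g x‖₊ : ℝ≥0∞) ^ p
      = (‖f x‖₊ : ℝ≥0∞) ^ p * ENNReal.ofReal (ψ x ^ (p - 2)) := by
    intro x
    rw [nnnorm_mul, ENNReal.coe_mul, ENNReal.mul_rpow_of_nonneg _ _ hp0.le, Complex.nnnorm_real,
      ← enorm_eq_nnnorm (ψ x ^ _), Real.enorm_eq_ofReal (Real.rpow_nonneg (hψ x).le _),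
      ofReal_rpow_of_nonneg (Real.rpow_nonneg (hψ x).le _) hp0.le, ← Real.rpow_mul (hψ x).le,
      div_mul_cancel₀ _ hp0.ne']
  calc ∫⁻ t in Ioi 0, ENNReal.ofReal (t ^ (p - 2)) * decRearr μ f t ^ p
      ≤ ∫⁻ t in Ioi 0, ENNReal.ofReal ((2 * C) ^ (p - 2)) * decRearr μ g (t / 2) ^ p :=
        setLIntegral_mono' measurableSet_Ioi fun t ht =>
          weighted_decRearr_rpow_le_of_young hψ hC hYoung hp f ht
    _ = ENNReal.ofReal ((2 * C) ^ (p - 2)) * ∫⁻ t in Ioi 0, decRearr μ g (t / 2) ^ p :=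
        lintegral_const_mul' _ _ ofReal_ne_top
    _ ≤ ENNReal.ofReal ((2 * C) ^ (p - 2))
          * (2 * ∫⁻ x, (‖f x‖₊ : ℝ≥0∞) ^ p * ENNReal.ofReal (ψ x ^ (p - 2)) ∂μ) := by
        gcongr
        simpa only [hg_rpow, ofReal_ofNat] using
          decRearr.lintegral_comp_div_rpow_le (μ := μ) hg two_pos hp0

theorem lorentzNorm_le_of_young (hψm : Measurable ψ) (hψ : ∀ x, 0 < ψ x) (hC : 0 < C)
    (hYoung : ∀ t : ℝ, 0 < t → μ {x | ψ x ≤ t} ≤ ENNReal.ofReal (C * t))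
    (hp : 2 < p) {f : X → ℂ} (hf : Measurable f) :
    lorentzNorm μ f (p / (p - 1)) p
      ≤ (2 * ENNReal.ofReal (p - 1) * ENNReal.ofReal ((2 * C) ^ (p - 2))
          * ∫⁻ x, (‖f x‖₊ : ℝ≥0∞) ^ p * ENNReal.ofReal (ψ x ^ (p - 2)) ∂μ) ^ (1 / p) := by
  rw [lorentzNorm_conj_exponent_eq μ f (by linarith)]
  have hp0 : 0 < p := by linarith
  refine rpow_le_rpow ?_ (by positivity)
  calc ENNReal.ofReal (p - 1) * ∫⁻ t in Ioi 0, ENNReal.ofReal (t ^ (p - 2)) * decRearr μ f t ^ p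
      ≤ ENNReal.ofReal (p - 1) * (ENNReal.ofReal ((2 * C) ^ (p - 2))
          * (2 * ∫⁻ x, (‖f x‖₊ : ℝ≥0∞) ^ p * ENNReal.ofReal (ψ x ^ (p - 2)) ∂μ)) := by
        gcongr
        exact lintegral_weighted_decRearr_le_of_young hψm hψ hC hYoung hp hf
    _ = _ := by ring

end Young

/-- If `ψ > 0` satisfies the Young condition `μ({ψ ≤ t}) ≤ C t` and `p > 2`, then any
measurable `f` with `∫ |f|^p ψ^{p-2} dμ < ∞` belongs to the Lorentz space `L^{p',p}(μ)`
(`1/p + 1/p' = 1`) with `‖f‖*_{p',p} ≤ C_p (∫ |f|^p ψ^{p-2} dμ)^{1/p}`. -/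
theorem stmt10 {X : Type*} [MeasurableSpace X] (μ : Measure X)
    (p : ℝ) (hp : 2 < p)
    (ψ : X → ℝ) (hψm : Measurable ψ) (hψpos : ∀ x, 0 < ψ x)
    (C : ℝ) (hC : ∀ t : ℝ, 0 < t → μ {x | ψ x ≤ t} ≤ ENNReal.ofReal (C * t)) :
    ∃ Cp : ℝ≥0, ∀ f : X → ℂ, Measurable f →
      (∫⁻ x, (‖f x‖₊ : ℝ≥0∞) ^ p * ENNReal.ofReal (ψ x ^ (p - 2)) ∂μ) < ∞ →
        lorentzNorm μ f (p / (p - 1)) p < ∞ ∧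
        lorentzNorm μ f (p / (p - 1)) p
          ≤ Cp * (∫⁻ x, (‖f x‖₊ : ℝ≥0∞) ^ p * ENNReal.ofReal (ψ x ^ (p - 2)) ∂μ) ^ (1 / p) := by
  have hexp : 0 ≤ 1 / p := by positivity
  set K : ℝ≥0∞ := 2 * ENNReal.ofReal (p - 1) * ENNReal.ofReal ((2 * max C 1) ^ (p - 2))
  have hK : K ^ (1 / p) ≠ ∞ := rpow_ne_top_of_nonneg hexp (by simp [K, mul_ne_top])
  refine ⟨(K ^ (1 / p)).toNNReal, fun f hf hI => ?_⟩
  have hYoung : ∀ t : ℝ, 0 < t → μ {x | ψ x ≤ t} ≤ ENNReal.ofReal (max C 1 * t) :=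
    fun t ht => (hC t ht).trans (ofReal_le_ofReal (by gcongr; exact le_max_left C 1))
  have hbound := (lorentzNorm_le_of_young hψm hψpos (by positivity) hYoung hp hf).trans_eq
    (ENNReal.mul_rpow_of_nonneg _ _ hexp)
  rw [coe_toNNReal hK]
  exact ⟨hbound.trans_lt (mul_lt_top hK.lt_top (rpow_lt_top_of_nonneg hexp hI.ne)), hbound⟩
end
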